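/- Let F be a differential field with constants K. If M ∈ F^{n×n} has rank one, satisfies M M' = M' M, and is not nilpotent, then M is F-diagonalizable and hence of Type 1. -/

import Mathlib

/-!
A rank-one matrix satisfies `M * M = c • M`, and `c ≠ 0` since `M` is not nilpotent, so
`P = c⁻¹ • M` is idempotent, hence diagonalizable, and so is `M = c • P`. Differentiating
`M * M = c • M` and using `M * M' = M' * M` gives `c • M' = c' • M`, which says exactly that
`P' = 0`: thus `M = c • P` with `P` constant, a Type 1 decomposition with a single term.
-/

def IsDeriv {F : Type*} [Field F] (d : F → F) : Prop :=
  (∀ a b, d (a + b) = d a + d b) ∧ (∀ a b, d (a * b) = d a * b + a * d b)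

/-- `M` is of Type 1: an `F`-linear combination of pairwise commuting matrices
with constant entries. -/
def IsType1 {F : Type*} [Field F] (d : F → F) {n : ℕ}
    (M : Matrix (Fin n) (Fin n) F) : Prop :=
  ∃ (k : ℕ) (f : Fin k → F) (C : Fin k → Matrix (Fin n) (Fin n) F),
    (∀ j p q, d (C j p q) = 0) ∧
    (∀ i j, C i * C j = C j * C i) ∧
    M = ∑ j, f j • C j

universe v

open Module Matrix

namespace IsDeriv

variable {F : Type*} [Field F] {d : F → F}

theorem map_zero (hd : IsDeriv d) : d 0 = 0 := by
  simpa using hd.1 0 0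

theorem map_one (hd : IsDeriv d) : d 1 = 0 := by
  simpa using hd.2 1 1

theorem map_sum (hd : IsDeriv d) {ι : Type*} (s : Finset ι) (f : ι → F) :
    d (∑ i ∈ s, f i) = ∑ i ∈ s, d (f i) :=
  _root_.map_sum (AddMonoidHom.mk' d hd.1) f s

theorem map_inv (hd : IsDeriv d) (a : F) : d a⁻¹ = -d a / a ^ 2 := by
  rcases eq_or_ne a 0 with rfl | ha
  · simp [hd.map_zero]
  have h := hd.2 a a⁻¹
  rw [mul_inv_cancel₀ ha, hd.map_one] at h
  rw [eq_div_iff (pow_ne_zero 2 ha)]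
  linear_combination -a * h - d a * mul_inv_cancel₀ ha

theorem map_matrix_mul (hd : IsDeriv d) {l m n : Type*} [Fintype m]
    (X : Matrix l m F) (Y : Matrix m n F) :
    (X * Y).map d = X.map d * Y + X * Y.map d := by
  ext i j
  simp only [Matrix.map_apply, Matrix.mul_apply, Matrix.add_apply, hd.map_sum, hd.2,
    Finset.sum_add_distrib]

theorem map_matrix_smul (hd : IsDeriv d) {m n : Type*} (a : F) (X : Matrix m n F) :
    (a • X).map d = d a • X + a • X.map d := by
  ext i j
  exact hd.2 a (X i j)

variable {n : Type*} [Fintype n] {M : Matrix n n F} {c : F}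

/- Differentiating `M * M = c • M` with `M * M' = M' * M` gives
`2 • M * M' = c' • M + c • M'`; multiplying by `M` and cancelling `c` yields `M * M' = c' • M`. -/
theorem smul_map_eq_of_mul_self_eq_smul (hd : IsDeriv d) (hc : c ≠ 0) (hMM : M * M = c • M)
    (hcomm : M * M.map d = M.map d * M) : c • M.map d = d c • M := by
  have hdiff : M * M.map d + M * M.map d = d c • M + c • M.map d := by
    have := congrArg (Matrix.map · d) hMM
    simpa only [hd.map_matrix_mul, hd.map_matrix_smul, ← hcomm] using this
  have hMM' : M * M.map d = d c • M := by
    have h := congrArg (M * ·) hdiff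
    simp only [Matrix.mul_add, Matrix.mul_smul, ← Matrix.mul_assoc, hMM, Matrix.smul_mul] at h
    refine smul_right_injective _ hc ?_
    show c • (M * M.map d) = c • (d c • M)
    rw [smul_comm]
    exact add_right_cancel h
  rw [hMM'] at hdiff
  exact (add_left_cancel hdiff).symm

theorem map_inv_smul_eq_zero_of_mul_self_eq_smul (hd : IsDeriv d) (hc : c ≠ 0)
    (hMM : M * M = c • M) (hcomm : M * M.map d = M.map d * M) : (c⁻¹ • M).map d = 0 := by
  have h := hd.smul_map_eq_of_mul_self_eq_smul hc hMM hcomm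
  have hM' : M.map d = (d c / c) • M := by
    rw [div_eq_inv_mul, ← smul_smul, ← h, smul_smul, inv_mul_cancel₀ hc, one_smul]
  rw [hd.map_matrix_smul, hd.map_inv, hM', smul_smul, ← add_smul]
  convert zero_smul F M using 2
  field_simp
  ring

end IsDeriv

theorem Matrix.exists_mul_self_eq_smul_of_rank_le_one {K n : Type*} [Field K] [Fintype n]
    {M : Matrix n n K} (hM : M.rank ≤ 1) : ∃ c : K, M * M = c • M := by
  obtain ⟨⟨v, hv⟩, hspan⟩ := finrank_le_one_iff.mp hM
  have hmul : ∀ w ∈ LinearMap.range M.mulVecLin, ∃ a : K, a • v = w := fun w hw => by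
    obtain ⟨a, ha⟩ := hspan ⟨w, hw⟩
    exact ⟨a, congrArg Subtype.val ha⟩
  obtain ⟨c, hc⟩ := hmul (M *ᵥ v) (LinearMap.mem_range_self _ v)
  refine ⟨c, ext_iff_mulVec.mpr fun x => ?_⟩
  obtain ⟨a, ha⟩ := hmul (M *ᵥ x) (LinearMap.mem_range_self _ x)
  rw [← mulVec_mulVec, smul_mulVec, ← ha, mulVec_smul, ← hc, smul_comm]

theorem LinearMap.IsIdempotentElem.exists_basis_apply_eq_self_or_eq_zero {K : Type*}
    {V : Type v} [Field K] [AddCommGroup V] [Module K V] {f : V →ₗ[K] V}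
    (hf : IsIdempotentElem f) :
    ∃ (κ : Type v) (b : Basis κ K V), ∀ i, f (b i) = b i ∨ f (b i) = 0 := by
  let b := ((Basis.ofVectorSpace K (LinearMap.range f)).prod
    (Basis.ofVectorSpace K (LinearMap.ker f))).map
      (Submodule.prodEquivOfIsCompl _ _ (IsIdempotentElem.isCompl hf))
  refine ⟨_, b, ?_⟩
  rintro (i | i)
  · left
    apply (IsIdempotentElem.mem_range_iff hf).mp
    simp [b]
  · right
    apply LinearMap.mem_ker.mp
    simp [b]

theorem Matrix.exists_isUnit_isDiag_of_forall_mulVec_basis_eq_smul {K ι : Type*} [Field K]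
    [Fintype ι] [DecidableEq ι] {M : Matrix ι ι K} (b : Basis ι K (ι → K))
    (hb : ∀ i, ∃ μ : K, M *ᵥ b i = μ • b i) :
    ∃ S : Matrix ι ι K, IsUnit S ∧ (S⁻¹ * M * S).IsDiag := by
  let e := Pi.basisFun K ι
  refine ⟨e.toMatrix b, ?_, ?_⟩
  · let := e.invertibleToMatrix b
    exact isUnit_of_invertible _
  · have hinv : (e.toMatrix b)⁻¹ = b.toMatrix e :=
      inv_eq_left_inv (b.toMatrix_mul_toMatrix_flip e)
    rw [hinv, ← LinearMap.toMatrix'_toLin' M, ← LinearMap.toMatrix_eq_toMatrix',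
      basis_toMatrix_mul_linearMap_toMatrix_mul_basis_toMatrix]
    intro i j hij
    obtain ⟨μ, hμ⟩ := hb j
    rw [LinearMap.toMatrix_apply, toLin'_apply, hμ, map_smul]
    simp [Ne.symm hij]

theorem Matrix.exists_isUnit_isDiag_of_isIdempotentElem {K ι : Type*} [Field K]
    [Fintype ι] [DecidableEq ι] {P : Matrix ι ι K} (hP : IsIdempotentElem P) :
    ∃ S : Matrix ι ι K, IsUnit S ∧ (S⁻¹ * P * S).IsDiag := by
  obtain ⟨κ, b, hb⟩ :=
    LinearMap.IsIdempotentElem.exists_basis_apply_eq_self_or_eq_zero (hP.map toLinAlgEquiv')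
  refine exists_isUnit_isDiag_of_forall_mulVec_basis_eq_smul
    (b.reindex (b.indexEquiv (Pi.basisFun K ι))) fun i => ?_
  rcases hb ((b.indexEquiv (Pi.basisFun K ι)).symm i) with h | h
  · exact ⟨1, by simpa using h⟩
  · exact ⟨0, by simpa using h⟩

/-- A rank-one non-nilpotent matrix commuting with its derivative is
`F`-diagonalizable and hence of Type 1. -/
theorem rank_one_not_nilpotent_type1 {F : Type*} [Field F]
    (d : F → F) (hd : IsDeriv d)
    {n : ℕ} (M : Matrix (Fin n) (Fin n) F)
    (hrank : M.rank = 1)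
    (hcomm : M * M.map d = M.map d * M)
    (hnil : ¬ IsNilpotent M) :
    (∃ S : Matrix (Fin n) (Fin n) F, IsUnit S ∧ (S⁻¹ * M * S).IsDiag) ∧
      IsType1 d M := by
  obtain ⟨c, hMM⟩ := exists_mul_self_eq_smul_of_rank_le_one hrank.le
  have hc : c ≠ 0 := by
    rintro rfl
    exact hnil ⟨2, by rw [pow_two, hMM, zero_smul]⟩
  set P := c⁻¹ • M
  have hMP : M = c • P := by rw [smul_inv_smul₀ hc]
  have hP : IsIdempotentElem P := by
    rw [IsIdempotentElem, smul_mul_smul_comm, hMM, smul_smul, mul_assoc, inv_mul_cancel₀ hc,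
      mul_one]
  have hPconst : P.map d = 0 := hd.map_inv_smul_eq_zero_of_mul_self_eq_smul hc hMM hcomm
  constructor
  · obtain ⟨S, hS, hdiag⟩ := exists_isUnit_isDiag_of_isIdempotentElem hP
    refine ⟨S, hS, ?_⟩
    rw [hMP, Matrix.mul_smul, Matrix.smul_mul]
    exact hdiag.smul c
  · refine ⟨1, fun _ => c, fun _ => P, fun _ p q => congrFun (congrFun hPconst p) q,
      fun _ _ => rfl, ?_⟩
    simp [← hMP]
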